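/- Let k ≥ 1 be an integer and 0 < T < ∞. Let h : [0,1] × [0,T) → ℝ be continuous, with continuous partial derivatives ∂_t h, ∂_r h, ∂_r² h on (0,1) × (0,T) satisfying ∂_t h = ∂_r² h + ∂_r h/r − k²·sin(2h)/(2r²) there, with finite energy (sup over t ∈ [0,T) of π·∫₀¹ ((∂_r h(r,t))² + k²·sin²(h(r,t))/r²)·r dr < ∞), with h(0,t) = 0 for all t ∈ [0,T), and such that t ↦ h(1,t) is uniformly continuous on [0,T). Then there exists τ₀ > 0 such that for every τ ∈ (0,τ₀] and every t ∈ [τ,T): h(r,t−τ) − π ≤ h(r,t) ≤ h(r,t−τ) + π for all r ∈ [0,1]. -/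

import Mathlib

open Real Set MeasureTheory

/-- Partial derivative in the radial variable `r` of `h(r,t)`. -/
noncomputable def pdr (h : ℝ × ℝ → ℝ) (p : ℝ × ℝ) : ℝ :=
  deriv (fun r => h (r, p.2)) p.1

/-- Second partial derivative in `r` of `h(r,t)`. -/
noncomputable def pdrr (h : ℝ × ℝ → ℝ) (p : ℝ × ℝ) : ℝ :=
  deriv (fun r => pdr h (r, p.2)) p.1

/-- Partial derivative in the time variable `t` of `h(r,t)`. -/
noncomputable def pdt (h : ℝ × ℝ → ℝ) (p : ℝ × ℝ) : ℝ :=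
  deriv (fun t => h (p.1, t)) p.2

/-- `h` is a classical solution of the `k`-equivariant radial harmonic map heat flow equation
`∂_t h = ∂_r² h + ∂_r h / r − k² sin(2h)/(2r²)` on the set `S`. -/
def IsClassicalSol (k : ℕ) (S : Set (ℝ × ℝ)) (h : ℝ × ℝ → ℝ) : Prop :=
  (∀ p ∈ S, DifferentiableAt ℝ (fun r => h (r, p.2)) p.1 ∧
      DifferentiableAt ℝ (fun r => pdr h (r, p.2)) p.1 ∧
      DifferentiableAt ℝ (fun t => h (p.1, t)) p.2) ∧
  ContinuousOn (pdr h) S ∧ ContinuousOn (pdrr h) S ∧ ContinuousOn (pdt h) S ∧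
  ∀ p ∈ S, pdt h p = pdrr h p + pdr h p / p.1 - (k : ℝ) ^ 2 * sin (2 * h p) / (2 * p.1 ^ 2)

/-!
Away from the axis `r = 0` the nonlinearity `k² sin (2h) / (2r²)` is Lipschitz in `h`, so the
weak maximum principle, applied to `e^{-Lt} (u - w)`, compares sub- and supersolutions on
rectangles `[ρ, 1] × [a, b]`. Since `sin (2h)` is `π`-periodic in `h`, the translates
`h (r, t - τ) ± π` are again solutions. On the parabolic boundary of `[ρ, 1] × [τ, T']` they
differ from `h` by less than `π` once `τ` is small (uniform continuity of `h` near `t = 0` and of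
the trace `t ↦ h (1, t)`) and `ρ` is small (`h (0, t) = 0`, so `|h| < 1` near the axis, and
`2 < π`); the same smallness handles the strip `r ≤ ρ`.
-/

open Filter Topology

theorem IsLocalMax.deriv_deriv_nonpos {f : ℝ → ℝ} {x : ℝ} (hf : IsLocalMax f x)
    (hc : ContinuousAt f x) : deriv (deriv f) x ≤ 0 := by
  by_contra! hpos
  -- The second derivative test would make `x` a local minimum as well, so `f` is locally constant.
  have hconst : f =ᶠ[𝓝 x] fun _ => f x := by
    filter_upwards [hf, isLocalMin_of_deriv_deriv_pos hpos hf.deriv_eq_zero hc] with y h₁ h₂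
    exact le_antisymm h₁ h₂
  have hderiv : deriv f =ᶠ[𝓝 x] fun _ => 0 := by
    filter_upwards [hconst.eventuallyEq_nhds] with y hy
    rw [hy.deriv_eq, deriv_const]
  rw [hderiv.deriv_eq, deriv_const] at hpos
  exact lt_irrefl _ hpos

theorem IsMaxOn.deriv_nonneg_of_Icc_right {f : ℝ → ℝ} {a b : ℝ} (hab : a < b)
    (hmax : IsMaxOn f (Icc a b) b) (hf : DifferentiableAt ℝ f b) : 0 ≤ deriv f b := by
  have hcone : a - b ∈ posTangentConeAt (Icc a b) b :=
    sub_mem_posTangentConeAt_of_segment_subset (by rw [segment_symm, segment_eq_Icc hab.le])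
  have h := hmax.localize.hasFDerivWithinAt_nonpos
    hf.hasDerivAt.hasDerivWithinAt.hasFDerivWithinAt hcone
  rw [ContinuousLinearMap.toSpanSingleton_apply, smul_eq_mul] at h
  nlinarith

theorem mul_le_deriv_of_isMaxOn_mul_exp {g : ℝ → ℝ} {L a b : ℝ} (hab : a < b)
    (hmax : IsMaxOn (fun t => g t * exp (-L * t)) (Icc a b) b) (hg : DifferentiableAt ℝ g b) :
    L * g b ≤ deriv g b := by
  have hexp : HasDerivAt (fun t => exp (-L * t)) (exp (-L * b) * -L) b := by
    simpa using ((hasDerivAt_id b).const_mul (-L)).exp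
  have hprod : HasDerivAt (fun t => g t * exp (-L * t))
      (deriv g b * exp (-L * b) + g b * (exp (-L * b) * -L)) b :=
    hg.hasDerivAt.mul hexp
  have hnonneg := hmax.deriv_nonneg_of_Icc_right hab hprod.differentiableAt
  rw [hprod.deriv] at hnonneg
  nlinarith [exp_pos (-L * b)]

theorem sin_two_mul_div_sub_le {κ ρ r x y : ℝ} (hρ : 0 < ρ) (hr : ρ ≤ r) (hyx : y ≤ x) :
    κ ^ 2 * sin (2 * y) / (2 * r ^ 2) - κ ^ 2 * sin (2 * x) / (2 * r ^ 2) ≤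
      κ ^ 2 / ρ ^ 2 * (x - y) := by
  have hsin : sin (2 * y) - sin (2 * x) ≤ 2 * (x - y) := by
    have h := abs_sin_sub_sin_le (2 * y) (2 * x)
    rw [abs_of_nonpos (a := 2 * y - 2 * x) (by linarith)] at h
    linarith [le_abs_self (sin (2 * y) - sin (2 * x))]
  calc κ ^ 2 * sin (2 * y) / (2 * r ^ 2) - κ ^ 2 * sin (2 * x) / (2 * r ^ 2)
      = κ ^ 2 * (sin (2 * y) - sin (2 * x)) / 2 / r ^ 2 := by field_simp
    _ ≤ κ ^ 2 * (2 * (x - y)) / 2 / r ^ 2 := by gcongr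
    _ ≤ κ ^ 2 * (2 * (x - y)) / 2 / ρ ^ 2 := by gcongr
    _ = κ ^ 2 / ρ ^ 2 * (x - y) := by ring

noncomputable def radialFlowRHS (k : ℕ) (h : ℝ × ℝ → ℝ) (p : ℝ × ℝ) : ℝ :=
  pdrr h p + pdr h p / p.1 - (k : ℝ) ^ 2 * sin (2 * h p) / (2 * p.1 ^ 2)

def DifferentiablePartialsAt (h : ℝ × ℝ → ℝ) (p : ℝ × ℝ) : Prop :=
  DifferentiableAt ℝ (fun r => h (r, p.2)) p.1 ∧
    DifferentiableAt ℝ (fun r => pdr h (r, p.2)) p.1 ∧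
    DifferentiableAt ℝ (fun t => h (p.1, t)) p.2

def IsSolution (k : ℕ) (S : Set (ℝ × ℝ)) (h : ℝ × ℝ → ℝ) : Prop :=
  ∀ p ∈ S, DifferentiablePartialsAt h p ∧ pdt h p = radialFlowRHS k h p

def IsSubsolution (k : ℕ) (S : Set (ℝ × ℝ)) (u : ℝ × ℝ → ℝ) : Prop :=
  ∀ p ∈ S, DifferentiablePartialsAt u p ∧ pdt u p ≤ radialFlowRHS k u p

def IsSupersolution (k : ℕ) (S : Set (ℝ × ℝ)) (w : ℝ × ℝ → ℝ) : Prop :=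
  ∀ p ∈ S, DifferentiablePartialsAt w p ∧ radialFlowRHS k w p ≤ pdt w p

section Solutions

variable {k : ℕ} {S S' : Set (ℝ × ℝ)} {h : ℝ × ℝ → ℝ}

theorem IsClassicalSol.isSolution (hsol : IsClassicalSol k S h) : IsSolution k S h :=
  fun p hp => ⟨hsol.1 p hp, hsol.2.2.2.2 p hp⟩

theorem IsSolution.mono (hsol : IsSolution k S h) (hS' : S' ⊆ S) : IsSolution k S' h :=
  fun p hp => hsol p (hS' hp)

theorem IsSolution.isSubsolution (hsol : IsSolution k S h) : IsSubsolution k S h :=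
  fun p hp => ⟨(hsol p hp).1, (hsol p hp).2.le⟩

theorem IsSolution.isSupersolution (hsol : IsSolution k S h) : IsSupersolution k S h :=
  fun p hp => ⟨(hsol p hp).1, (hsol p hp).2.ge⟩

end Solutions

theorem pdr_eq_and_pdrr_le_of_isLocalMax {u w : ℝ × ℝ → ℝ} {r₀ t₀ : ℝ}
    (hu : ∀ᶠ r in 𝓝 r₀, DifferentiableAt ℝ (fun r => u (r, t₀)) r)
    (hw : ∀ᶠ r in 𝓝 r₀, DifferentiableAt ℝ (fun r => w (r, t₀)) r)
    (hu' : DifferentiableAt ℝ (fun r => pdr u (r, t₀)) r₀)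
    (hw' : DifferentiableAt ℝ (fun r => pdr w (r, t₀)) r₀)
    (hmax : IsLocalMax (fun r => u (r, t₀) - w (r, t₀)) r₀) :
    pdr u (r₀, t₀) = pdr w (r₀, t₀) ∧ pdrr u (r₀, t₀) ≤ pdrr w (r₀, t₀) := by
  have hderiv : deriv (fun r => u (r, t₀) - w (r, t₀)) =ᶠ[𝓝 r₀]
      fun r => pdr u (r, t₀) - pdr w (r, t₀) := by
    filter_upwards [hu, hw] with r hur hwr using deriv_fun_sub hur hwr
  constructor
  · exact sub_eq_zero.1 (hderiv.eq_of_nhds ▸ hmax.deriv_eq_zero)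
  · have h := hmax.deriv_deriv_nonpos (hu.self_of_nhds.sub hw.self_of_nhds).continuousAt
    rw [hderiv.deriv_eq, deriv_fun_sub hu' hw'] at h
    exact sub_nonpos.1 h

theorem le_of_le_on_parabolicBoundary {k : ℕ} {ρ₁ ρ₂ a b : ℝ} (hρ₁ : 0 < ρ₁)
    {u w : ℝ × ℝ → ℝ}
    (hu : ContinuousOn u (Icc ρ₁ ρ₂ ×ˢ Icc a b)) (hw : ContinuousOn w (Icc ρ₁ ρ₂ ×ˢ Icc a b))
    (hsub : IsSubsolution k (Ioo ρ₁ ρ₂ ×ˢ Ioc a b) u)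
    (hsuper : IsSupersolution k (Ioo ρ₁ ρ₂ ×ˢ Ioc a b) w)
    (hbdry : ∀ p ∈ Icc ρ₁ ρ₂ ×ˢ Icc a b, (p.1 = ρ₁ ∨ p.1 = ρ₂ ∨ p.2 = a) → u p ≤ w p) :
    ∀ p ∈ Icc ρ₁ ρ₂ ×ˢ Icc a b, u p ≤ w p := by
  intro p hp
  by_contra! hlt
  -- `L` exceeds the Lipschitz constant `k² / ρ₁²` of the nonlinearity on `r ≥ ρ₁`.
  set L : ℝ := (k : ℝ) ^ 2 / ρ₁ ^ 2 + 1
  set φ : ℝ × ℝ → ℝ := fun q => (u q - w q) * exp (-L * q.2)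
  have hφ : ContinuousOn φ (Icc ρ₁ ρ₂ ×ˢ Icc a b) :=
    (hu.sub hw).mul (by fun_prop : Continuous fun q : ℝ × ℝ => exp (-L * q.2)).continuousOn
  obtain ⟨⟨r₀, t₀⟩, hp₀, hmax⟩ := (isCompact_Icc.prod isCompact_Icc).exists_isMaxOn ⟨p, hp⟩ hφ
  have hD : 0 < u (r₀, t₀) - w (r₀, t₀) := by
    have : 0 < φ p := mul_pos (sub_pos.2 hlt) (exp_pos _)
    exact pos_of_mul_pos_left (this.trans_le (hmax hp)) (exp_pos _).le
  have hint : (r₀, t₀) ∈ Ioo ρ₁ ρ₂ ×ˢ Ioc a b := by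
    obtain ⟨⟨hr₁, hr₂⟩, ht₁, ht₂⟩ := hp₀
    refine ⟨⟨hr₁.lt_of_ne ?_, hr₂.lt_of_ne ?_⟩, ht₁.lt_of_ne ?_, ht₂⟩ <;> rintro rfl <;>
      linarith [hbdry _ ⟨⟨hr₁, hr₂⟩, ht₁, ht₂⟩ (by simp)]
  obtain ⟨⟨-, hupdr, hut⟩, hu_le⟩ := hsub _ hint
  obtain ⟨⟨-, hwpdr, hwt⟩, hw_ge⟩ := hsuper _ hint
  have hnhds : Ioo ρ₁ ρ₂ ∈ 𝓝 r₀ := Ioo_mem_nhds hint.1.1 hint.1.2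
  obtain ⟨hpdr, hpdrr⟩ := pdr_eq_and_pdrr_le_of_isLocalMax
    (Filter.mem_of_superset hnhds fun r hr => (hsub (r, t₀) ⟨hr, hint.2⟩).1.1)
    (Filter.mem_of_superset hnhds fun r hr => (hsuper (r, t₀) ⟨hr, hint.2⟩).1.1) hupdr hwpdr
    (Filter.mem_of_superset hnhds fun r hr =>
      le_of_mul_le_mul_right (hmax (show (r, t₀) ∈ _ from ⟨Ioo_subset_Icc_self hr, hp₀.2⟩))
        (exp_pos _))
  have htime : L * (u (r₀, t₀) - w (r₀, t₀)) ≤ pdt u (r₀, t₀) - pdt w (r₀, t₀) := by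
    have := mul_le_deriv_of_isMaxOn_mul_exp hint.2.1 (g := fun t => u (r₀, t) - w (r₀, t))
      (fun t ht => hmax (show (r₀, t) ∈ _ from ⟨hp₀.1, ht.1, ht.2.trans hp₀.2.2⟩)) (hut.sub hwt)
    rwa [deriv_fun_sub hut hwt] at this
  have hnonlin := sin_two_mul_div_sub_le (κ := k) hρ₁ hint.1.1.le (sub_nonneg.1 hD.le)
  have hL : L * (u (r₀, t₀) - w (r₀, t₀)) =
      (k : ℝ) ^ 2 / ρ₁ ^ 2 * (u (r₀, t₀) - w (r₀, t₀)) + (u (r₀, t₀) - w (r₀, t₀)) := by ring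
  unfold radialFlowRHS at hu_le hw_ge
  rw [hpdr] at hu_le
  linarith

def timeTranslate (h : ℝ × ℝ → ℝ) (τ c : ℝ) : ℝ × ℝ → ℝ := fun p => h (p.1, p.2 - τ) + c

section TimeTranslate

variable {h : ℝ × ℝ → ℝ} {τ c : ℝ}

theorem pdr_timeTranslate (p : ℝ × ℝ) : pdr (timeTranslate h τ c) p = pdr h (p.1, p.2 - τ) :=
  deriv_add_const c

theorem pdrr_timeTranslate (p : ℝ × ℝ) : pdrr (timeTranslate h τ c) p = pdrr h (p.1, p.2 - τ) :=
  congrArg (deriv · p.1) (funext fun r => pdr_timeTranslate (r, p.2))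

theorem pdt_timeTranslate (p : ℝ × ℝ) : pdt (timeTranslate h τ c) p = pdt h (p.1, p.2 - τ) := by
  simp only [pdt, timeTranslate, deriv_add_const]
  exact deriv_comp_sub_const (fun t => h (p.1, t)) τ p.2

theorem DifferentiablePartialsAt.timeTranslate {p : ℝ × ℝ}
    (hp : DifferentiablePartialsAt h (p.1, p.2 - τ)) :
    DifferentiablePartialsAt (timeTranslate h τ c) p := by
  obtain ⟨hr, hpdr, ht⟩ := hp
  refine ⟨hr.add_const c, ?_, (ht.comp p.2 (differentiableAt_id.sub_const τ)).add_const c⟩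
  simpa only [pdr_timeTranslate] using hpdr

theorem radialFlowRHS_timeTranslate (k : ℕ) (n : ℤ) (p : ℝ × ℝ) :
    radialFlowRHS k (timeTranslate h τ (n * π)) p = radialFlowRHS k h (p.1, p.2 - τ) := by
  simp only [radialFlowRHS, pdr_timeTranslate, pdrr_timeTranslate, timeTranslate, mul_add]
  rw [show 2 * (n * π) = (n : ℝ) * (2 * π) by ring, sin_add_int_mul_two_pi]

theorem IsSolution.timeTranslate {k : ℕ} {S S' : Set (ℝ × ℝ)} (hsol : IsSolution k S h) (n : ℤ)
    (hS : MapsTo (fun p => (p.1, p.2 - τ)) S' S) :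
    IsSolution k S' (timeTranslate h τ (n * π)) := fun p hp =>
  ⟨(hsol _ (hS hp)).1.timeTranslate, by
    rw [pdt_timeTranslate, radialFlowRHS_timeTranslate, (hsol _ (hS hp)).2]⟩

end TimeTranslate

theorem abs_sub_timeTranslate_le_pi {k : ℕ} {h : ℝ × ℝ → ℝ} {T ρ τ T' : ℝ}
    (hcont : ContinuousOn h (Icc 0 1 ×ˢ Ico 0 T)) (hsol : IsSolution k (Ioo 0 1 ×ˢ Ioo 0 T) h)
    (hρ : 0 < ρ) (hτ : 0 < τ) (hT' : T' < T)
    (hnear : ∀ r ∈ Icc (0 : ℝ) 1, r ≤ ρ → ∀ s ∈ Icc τ T', |h (r, s) - h (r, s - τ)| ≤ π)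
    (houter : ∀ s ∈ Icc τ T', |h (1, s) - h (1, s - τ)| ≤ π)
    (hinit : ∀ r ∈ Icc ρ 1, |h (r, τ) - h (r, 0)| ≤ π) :
    ∀ p ∈ Icc (0 : ℝ) 1 ×ˢ Icc τ T', |h p - h (p.1, p.2 - τ)| ≤ π := by
  rintro ⟨r, t⟩ ⟨hr, ht⟩
  rcases le_total r ρ with hrρ | hρr
  · exact hnear r hr hrρ t ht
  have hshift : MapsTo (fun p : ℝ × ℝ => (p.1, p.2 - τ))
      (Icc ρ 1 ×ˢ Icc τ T') (Icc 0 1 ×ˢ Ico 0 T) := fun p ⟨hr, hs⟩ =>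
    ⟨⟨hρ.le.trans hr.1, hr.2⟩, by linarith [hs.1], by linarith [hs.2]⟩
  have hcont_h : ContinuousOn h (Icc ρ 1 ×ˢ Icc τ T') :=
    hcont.mono fun p ⟨hr, hs⟩ => ⟨⟨hρ.le.trans hr.1, hr.2⟩, hτ.le.trans hs.1, hs.2.trans_lt hT'⟩
  have hcont_tr (c : ℝ) : ContinuousOn (timeTranslate h τ c) (Icc ρ 1 ×ˢ Icc τ T') :=
    (hcont.comp (by fun_prop) hshift).add continuousOn_const
  have hsol_h : IsSolution k (Ioo ρ 1 ×ˢ Ioc τ T') h :=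
    hsol.mono fun p ⟨hr, hs⟩ => ⟨⟨hρ.trans hr.1, hr.2⟩, hτ.trans hs.1, hs.2.trans_lt hT'⟩
  have hsol_tr (n : ℤ) : IsSolution k (Ioo ρ 1 ×ˢ Ioc τ T') (timeTranslate h τ (n * π)) :=
    hsol.timeTranslate n fun p ⟨hr, hs⟩ =>
      ⟨⟨hρ.trans hr.1, hr.2⟩, by linarith [hs.1], by linarith [hs.2]⟩
  have hbdry : ∀ p ∈ Icc ρ 1 ×ˢ Icc τ T', (p.1 = ρ ∨ p.1 = 1 ∨ p.2 = τ) →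
      |h p - h (p.1, p.2 - τ)| ≤ π := by
    rintro ⟨r, s⟩ ⟨hr, hs⟩ (rfl | rfl | rfl)
    · exact hnear _ ⟨hρ.le, hr.2⟩ le_rfl s hs
    · exact houter s hs
    · simpa using hinit r hr
  have hupper := le_of_le_on_parabolicBoundary hρ hcont_h (hcont_tr _) hsol_h.isSubsolution
    (hsol_tr 1).isSupersolution fun p hp hb => by
      simp only [timeTranslate, Int.cast_one, one_mul]
      linarith [(abs_le.1 (hbdry p hp hb)).2]
  have hlower := le_of_le_on_parabolicBoundary hρ (hcont_tr _) hcont_h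
    (hsol_tr (-1)).isSubsolution hsol_h.isSupersolution fun p hp hb => by
      simp only [timeTranslate, Int.cast_neg, Int.cast_one, neg_one_mul]
      linarith [(abs_le.1 (hbdry p hp hb)).1]
  have h₁ := hupper (r, t) ⟨⟨hρr, hr.2⟩, ht⟩
  have h₂ := hlower (r, t) ⟨⟨hρr, hr.2⟩, ht⟩
  simp only [timeTranslate, Int.cast_neg, Int.cast_one, one_mul, neg_one_mul] at h₁ h₂
  exact abs_le.2 ⟨by linarith, by linarith⟩

theorem exists_pos_abs_lt_of_eq_zero_on_axis {h : ℝ × ℝ → ℝ} {T' ε : ℝ}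
    (hcont : ContinuousOn h (Icc 0 1 ×ˢ Icc 0 T')) (hzero : ∀ s ∈ Icc 0 T', h (0, s) = 0)
    (hε : 0 < ε) : ∃ ρ > 0, ∀ r ∈ Icc (0 : ℝ) 1, r ≤ ρ → ∀ s ∈ Icc 0 T', |h (r, s)| < ε := by
  obtain ⟨δ, hδ, hδh⟩ := Metric.uniformContinuousOn_iff.1
    ((isCompact_Icc.prod isCompact_Icc).uniformContinuousOn_of_continuous hcont) ε hε
  refine ⟨δ / 2, half_pos hδ, fun r hr hrδ s hs => ?_⟩
  have hdist : dist (r, s) (0, s) < δ := by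
    simp only [Prod.dist_eq, Real.dist_eq, sub_zero, sub_self, abs_zero, abs_of_nonneg hr.1]
    rw [max_eq_left hr.1]
    linarith
  simpa [Real.dist_eq, hzero s hs] using
    hδh (r, s) ⟨hr, hs⟩ (0, s) ⟨⟨le_rfl, zero_le_one⟩, hs⟩ hdist

theorem exists_pos_abs_sub_initial_lt {h : ℝ × ℝ → ℝ} {T₁ ε : ℝ}
    (hcont : ContinuousOn h (Icc 0 1 ×ˢ Icc 0 T₁)) (hε : 0 < ε) :
    ∃ δ > 0, ∀ r ∈ Icc (0 : ℝ) 1, ∀ τ ∈ Icc 0 T₁, τ < δ → |h (r, τ) - h (r, 0)| < ε := by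
  obtain ⟨δ, hδ, hδh⟩ := Metric.uniformContinuousOn_iff.1
    ((isCompact_Icc.prod isCompact_Icc).uniformContinuousOn_of_continuous hcont) ε hε
  refine ⟨δ, hδ, fun r hr τ hτ hτδ => ?_⟩
  have hdist : dist (r, τ) (r, 0) < δ := by
    simp only [Prod.dist_eq, Real.dist_eq, sub_zero, sub_self, abs_zero, abs_of_nonneg hτ.1]
    rwa [max_eq_right hτ.1]
  simpa [Real.dist_eq] using hδh (r, τ) ⟨hr, hτ⟩ (r, 0) ⟨hr, le_rfl, hτ.1.trans hτ.2⟩ hdist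

theorem comparison_with_time_translate_general
    (k : ℕ) (T : ℝ) (hT : 0 < T)
    (h : ℝ × ℝ → ℝ)
    (hcont : ContinuousOn h (Icc (0:ℝ) 1 ×ˢ Ico (0:ℝ) T))
    (hsol : IsClassicalSol k (Ioo (0:ℝ) 1 ×ˢ Ioo (0:ℝ) T) h)
    (hzero : ∀ t ∈ Ico (0:ℝ) T, h (0, t) = 0)
    (hUC : UniformContinuousOn (fun t => h (1, t)) (Ico 0 T)) :
    ∃ τ₀ : ℝ, 0 < τ₀ ∧ ∀ τ ∈ Ioc (0:ℝ) τ₀, ∀ t ∈ Ico τ T, ∀ r ∈ Icc (0:ℝ) 1,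
      h (r, t - τ) - π ≤ h (r, t) ∧ h (r, t) ≤ h (r, t - τ) + π := by
  have hcont_on (T₁ : ℝ) (hT₁ : T₁ < T) : ContinuousOn h (Icc 0 1 ×ˢ Icc 0 T₁) :=
    hcont.mono (prod_mono_right (Icc_subset_Ico_right hT₁))
  obtain ⟨δ₁, hδ₁, htrace⟩ := Metric.uniformContinuousOn_iff.1 hUC 1 one_pos
  obtain ⟨δ₀, hδ₀, hinit⟩ := exists_pos_abs_sub_initial_lt (hcont_on (T / 2) (by linarith)) one_pos
  refine ⟨min (min δ₁ δ₀) T / 2, by positivity, ?_⟩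
  rintro τ ⟨hτ, hτ₀⟩ t ⟨htτ, htT⟩ r hr
  obtain ⟨hτδ₁, hτδ₀, hτT⟩ : τ < δ₁ ∧ τ < δ₀ ∧ τ ≤ T / 2 := by
    refine ⟨?_, ?_, ?_⟩ <;> linarith [min_le_left (min δ₁ δ₀) T, min_le_right (min δ₁ δ₀) T,
      min_le_left δ₁ δ₀, min_le_right δ₁ δ₀]
  obtain ⟨ρ, hρ, hsmall⟩ := exists_pos_abs_lt_of_eq_zero_on_axis
    (hcont_on ((t + T) / 2) (by linarith)) (fun s hs => hzero s ⟨hs.1, by linarith [hs.2]⟩) one_pos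
  suffices |h (r, t) - h (r, t - τ)| ≤ π by
    constructor <;> linarith [abs_le.1 this]
  refine abs_sub_timeTranslate_le_pi hcont hsol.isSolution hρ hτ (by linarith : (t + T) / 2 < T)
    (fun x hx hxρ s hs => ?_) (fun s hs => ?_) (fun x hx => ?_) (r, t) ⟨hr, htτ, by linarith⟩
  · refine (abs_sub _ _).trans ?_
    linarith [hsmall x hx hxρ s ⟨by linarith [hs.1], hs.2⟩,
      hsmall x hx hxρ (s - τ) ⟨by linarith [hs.1], by linarith [hs.2]⟩, pi_gt_three]
  · have hdist : dist s (s - τ) < δ₁ := by rwa [Real.dist_eq, sub_sub_cancel, abs_of_pos hτ]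
    have := htrace s ⟨by linarith [hs.1], by linarith [hs.2]⟩ (s - τ)
      ⟨by linarith [hs.1], by linarith [hs.2]⟩ hdist
    rw [Real.dist_eq] at this
    linarith [pi_gt_three]
  · linarith [hinit x ⟨hρ.le.trans hx.1, hx.2⟩ τ ⟨hτ.le, hτT⟩ hτδ₀, pi_gt_three]

/-- Comparison of `h` with its own time translates (part of the paper's Corollary 4.10):
for a finite-energy solution with `h(0,t) = 0` and uniformly continuous boundary trace
`t ↦ h(1,t)`, there is `τ₀ > 0` with `h(r,t−τ) − π ≤ h(r,t) ≤ h(r,t−τ) + π` for all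
`0 < τ ≤ τ₀`, `t ∈ [τ,T)`, `r ∈ [0,1]`. -/
theorem comparison_with_time_translate
    (k : ℕ) (hk : 1 ≤ k) (T : ℝ) (hT : 0 < T)
    (h : ℝ × ℝ → ℝ)
    (hcont : ContinuousOn h (Icc (0:ℝ) 1 ×ˢ Ico (0:ℝ) T))
    (hsol : IsClassicalSol k (Ioo (0:ℝ) 1 ×ˢ Ioo (0:ℝ) T) h)
    (henergy : ∃ E₀ : ℝ, ∀ t ∈ Ico (0:ℝ) T,
      IntegrableOn
        (fun r => (pdr h (r, t) ^ 2 + (k : ℝ) ^ 2 * sin (h (r, t)) ^ 2 / r ^ 2) * r)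
        (Ioo 0 1) ∧
      π * ∫ r in Ioo (0:ℝ) 1,
          (pdr h (r, t) ^ 2 + (k : ℝ) ^ 2 * sin (h (r, t)) ^ 2 / r ^ 2) * r ≤ E₀)
    (hzero : ∀ t ∈ Ico (0:ℝ) T, h (0, t) = 0)
    (hUC : UniformContinuousOn (fun t => h (1, t)) (Ico 0 T)) :
    ∃ τ₀ : ℝ, 0 < τ₀ ∧ ∀ τ ∈ Ioc (0:ℝ) τ₀, ∀ t ∈ Ico τ T, ∀ r ∈ Icc (0:ℝ) 1,
      h (r, t - τ) - π ≤ h (r, t) ∧ h (r, t) ≤ h (r, t - τ) + π :=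
  comparison_with_time_translate_general k T hT h hcont hsol hzero hUC
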